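/- arXiv:1302.4315 — 3 statements merged into one kernel-verified Lean document; each statement's English description precedes it below -/
import Mathlib

section
/- The map f̃_a(u,v) := (γ_a(u+v) + γ_a(u−v))/2 is an immersion at every point (u,v) with v ∈ (0,π); i.e., the partial derivatives ∂f̃_a/∂u = (γ_a'(u+v)+γ_a'(u−v))/2 and ∂f̃_a/∂v = (γ_a'(u+v)−γ_a'(u−v))/2 are linearly independent whenever v is not an integer multiple of π. -/
/-!
Both partial derivatives are half-sums and half-differences of `γ_a'(u + v)` and `γ_a'(u - v)`,
so they are independent exactly when these two velocities are. Each velocity is a positive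
multiple `ξ_a(s) · (1, -cos s, -sin s)` (positivity of `ξ_a` is `a⁴ + a⁻⁴ > 2 ≥ -2 cos 4t`), and
two such null directions are parallel only if they coincide, i.e. only if `s ≡ t (mod 2π)`.
For `s - t = 2v` this is excluded by `v ∉ πℤ`.
-/

open Real

noncomputable def xi (a t : ℝ) : ℝ :=
  2 / Real.sqrt (2 * Real.cos (4 * t) + (a ^ 4 + (a ^ 4)⁻¹))

/-- The velocity `γ_a'(s) = ξ_a(s)·(1, −cos s, −sin s)` of the lightlike curve. -/
noncomputable def gam' (a : ℝ) (s : ℝ) : ℝ × ℝ × ℝ :=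
  (xi a s, -(xi a s * Real.cos s), -(xi a s * Real.sin s))

lemma LinearIndependent.pair_half_add_half_sub_iff {K V : Type*} [Field K] [NeZero (2 : K)]
    [AddCommGroup V] [Module K V] {x y : V} :
    LinearIndependent K ![(1 / 2 : K) • (x + y), (1 / 2 : K) • (x - y)] ↔
      LinearIndependent K ![x, y] := by
  rw [LinearIndependent.pair_smul_iff (by simp [NeZero.ne] : (1 / 2 : K) ≠ 0)]
  have hdet : (1 : K) * -1 ≠ 1 * 1 := by
    simpa [neg_eq_iff_add_eq_zero, one_add_one_eq_two] using NeZero.ne (2 : K)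
  have h := LinearIndependent.pair_add_smul_add_smul_iff (R := K) (x := x) (y := y) (1 : K) 1 1 (-1)
  rw [and_iff_left hdet] at h
  rw [← h]
  simp only [one_smul, neg_one_smul, sub_eq_add_neg]

lemma two_lt_add_inv {x : ℝ} (hx : 0 < x) (hx₁ : x ≠ 1) : 2 < x + x⁻¹ := by
  have : 0 < (x - 1) ^ 2 / x := by positivity [sub_ne_zero.2 hx₁]
  calc 2 < 2 + (x - 1) ^ 2 / x := by linarith
    _ = x + x⁻¹ := by field_simp; ring

lemma xi_pos {a : ℝ} (ha₀ : a ≠ 0) (ha₁ : a ^ 4 ≠ 1) (t : ℝ) : 0 < xi a t := by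
  have h₁ := two_lt_add_inv (by positivity) ha₁
  have h₂ := neg_one_le_cos (4 * t)
  have : 0 < 2 * cos (4 * t) + (a ^ 4 + (a ^ 4)⁻¹) := by linarith
  unfold xi
  positivity

noncomputable def nullDir (s : ℝ) : ℝ × ℝ × ℝ := (1, -cos s, -sin s)

lemma gam'_eq_xi_smul_nullDir (a s : ℝ) : gam' a s = xi a s • nullDir s := by
  simp [gam', nullDir]

lemma linearIndependent_nullDir {s t : ℝ} (h : (s : Angle) ≠ t) :
    LinearIndependent ℝ ![nullDir s, nullDir t] := by
  rw [LinearIndependent.pair_iff' (by simp [nullDir])]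
  intro c hc
  simp only [nullDir, Prod.smul_mk, smul_eq_mul, Prod.mk.injEq, mul_one] at hc
  obtain ⟨rfl, hcos, hsin⟩ := hc
  exact h (Angle.cos_sin_inj (by linarith) (by linarith))

theorem statement4 (a : ℝ) (ha : a ∈ Set.Ioo (0:ℝ) 1) (u v : ℝ)
    (hv : ¬ ∃ n : ℤ, v = n * π) :
    LinearIndependent ℝ
      ![(1/2 : ℝ) • (gam' a (u + v) + gam' a (u - v)),
        (1/2 : ℝ) • (gam' a (u + v) - gam' a (u - v))] := by
  have hxi (s : ℝ) : IsUnit (xi a s) :=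
    (xi_pos ha.1.ne' (pow_lt_one₀ ha.1.le ha.2 four_ne_zero).ne s).ne'.isUnit
  have hangle : ((u + v : ℝ) : Angle) ≠ (u - v : ℝ) := by
    rw [Ne, Angle.angle_eq_iff_two_pi_dvd_sub]
    rintro ⟨n, hn⟩
    exact hv ⟨n, by linarith⟩
  rw [LinearIndependent.pair_half_add_half_sub_iff, gam'_eq_xi_smul_nullDir,
    gam'_eq_xi_smul_nullDir, LinearIndependent.pair_smul_smul_iff (hxi _) (hxi _)]
  exact linearIndependent_nullDir hangle
end

section
/- For every v ∈ ℝ, ∂f̃_a/∂v (0, v) = (−2 sin v / √(2cos 4v + a⁴ + a⁻⁴))·(0, 0, 1); hence the curve v ↦ f̃_a(0,v) for 0 < v < π traces a line segment parallel to the x₂-axis. -/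
/-!
Since `ξ_a` is even, the first two components of `γ_a` have even integrands and the third an odd
one, so `γ_a(-v)` is `γ_a(v)` with its first two components negated. Hence
`f̃_a(0, v) = (γ_a(v) + γ_a(-v))/2 = (0, 0, γ_a(v).2.2)`, and the fundamental theorem of calculus
gives its derivative `-ξ_a(v) sin v`; continuity of `ξ_a` rests on
`2 cos θ + x + x⁻¹ ≥ (x - 1)² / x > 0` for `0 < x ≠ 1`.
-/

open Real

noncomputable def gam (a : ℝ) (s : ℝ) : ℝ × ℝ × ℝ :=
  (∫ t in (0:ℝ)..s, xi a t,
   ∫ t in (0:ℝ)..s, -(xi a t * Real.cos t),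
   ∫ t in (0:ℝ)..s, -(xi a t * Real.sin t))

noncomputable def ftilde (a : ℝ) (u v : ℝ) : ℝ × ℝ × ℝ :=
  (1/2 : ℝ) • (gam a (u + v) + gam a (u - v))

section IntervalIntegral

variable {E : Type*} [NormedAddCommGroup E] [NormedSpace ℝ E] {f : ℝ → E}

theorem Function.Even.intervalIntegral_zero_neg (hf : f.Even) (w : ℝ) :
    ∫ t in (0 : ℝ)..-w, f t = -∫ t in (0 : ℝ)..w, f t := calc
  _ = ∫ t in (0 : ℝ)..-w, f (-t) := intervalIntegral.integral_congr fun t _ => (hf t).symm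
  _ = -∫ t in (0 : ℝ)..w, f t := by
    rw [intervalIntegral.integral_comp_neg, neg_neg, neg_zero, intervalIntegral.integral_symm]

theorem Function.Odd.intervalIntegral_zero_neg (hf : f.Odd) (w : ℝ) :
    ∫ t in (0 : ℝ)..-w, f t = ∫ t in (0 : ℝ)..w, f t := calc
  _ = -∫ t in (0 : ℝ)..-w, f (-t) := by
    rw [← intervalIntegral.integral_neg]
    exact intervalIntegral.integral_congr fun t _ => by simp only [hf t, neg_neg]
  _ = ∫ t in (0 : ℝ)..w, f t := by
    rw [intervalIntegral.integral_comp_neg, neg_neg, neg_zero, intervalIntegral.integral_symm,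
      neg_neg]

end IntervalIntegral

theorem two_mul_cos_add_add_inv_pos {x : ℝ} (hx : 0 < x) (hx1 : x ≠ 1) (θ : ℝ) :
    0 < 2 * cos θ + (x + x⁻¹) := by
  have hgap : x + x⁻¹ - 2 = (x - 1) ^ 2 / x := by field_simp; ring
  have : 0 < (x - 1) ^ 2 / x := div_pos (by positivity) hx
  nlinarith [neg_one_le_cos θ]

theorem xi_neg (a t : ℝ) : xi a (-t) = xi a t := by
  simp only [xi, mul_neg, cos_neg]

theorem continuous_xi {a : ℝ} (ha₀ : 0 < a) (ha₁ : a ≠ 1) : Continuous (xi a) := by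
  have hpos (t : ℝ) := two_mul_cos_add_add_inv_pos (pow_pos ha₀ 4)
    ((pow_eq_one_iff_of_nonneg ha₀.le (by norm_num)).not.2 ha₁) (4 * t)
  exact continuous_const.div (by fun_prop) fun t => (sqrt_pos.2 (hpos t)).ne'

theorem gam_neg (a s : ℝ) :
    gam a (-s) = (-(gam a s).1, -(gam a s).2.1, (gam a s).2.2) := by
  have h₁ : Function.Even (xi a) := xi_neg a
  have h₂ : Function.Even fun t => -(xi a t * cos t) := fun t => by simp only [xi_neg, cos_neg]
  have h₃ : Function.Odd fun t => -(xi a t * sin t) := fun t => by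
    simp only [xi_neg, sin_neg, mul_neg]
  simp only [gam, h₁.intervalIntegral_zero_neg, h₂.intervalIntegral_zero_neg,
    h₃.intervalIntegral_zero_neg]

theorem ftilde_zero_left (a v : ℝ) : ftilde a 0 v = (0, 0, (gam a v).2.2) := by
  rw [ftilde, zero_add, zero_sub, gam_neg]
  ext <;> simp only [Prod.smul_fst, Prod.smul_snd, Prod.fst_add, Prod.snd_add, smul_eq_mul] <;> ring

theorem hasDerivAt_gam_snd_snd {a : ℝ} (ha₀ : 0 < a) (ha₁ : a ≠ 1) (s : ℝ) :
    HasDerivAt (fun s => (gam a s).2.2) (-(xi a s * sin s)) s := by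
  have hcont : Continuous fun t => -(xi a t * sin t) := by
    have := continuous_xi ha₀ ha₁; fun_prop
  exact intervalIntegral.integral_hasDerivAt_right (hcont.intervalIntegrable _ _)
    (hcont.stronglyMeasurableAtFilter _ _) hcont.continuousAt

theorem statement7 (a : ℝ) (ha : a ∈ Set.Ioo (0:ℝ) 1) :
    (∀ v : ℝ, HasDerivAt (fun v' => ftilde a 0 v')
      ((-2 * Real.sin v / Real.sqrt (2 * Real.cos (4 * v) + (a ^ 4 + (a ^ 4)⁻¹))) •
        ((0:ℝ), (0:ℝ), (1:ℝ))) v) ∧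
    (∀ v ∈ Set.Ioo 0 π, (ftilde a 0 v).1 = (ftilde a 0 (π / 2)).1 ∧
      (ftilde a 0 v).2.1 = (ftilde a 0 (π / 2)).2.1) := by
  refine ⟨fun v => ?_, fun v _ => by simp only [ftilde_zero_left, and_self]⟩
  simp only [ftilde_zero_left]
  have h := (hasDerivAt_const v (0 : ℝ)).prodMk
    ((hasDerivAt_const v (0 : ℝ)).prodMk (hasDerivAt_gam_snd_snd ha.1 ha.2.ne v))
  convert h using 1
  simp only [xi, Prod.smul_mk, smul_eq_mul, mul_zero, mul_one]
  congr 2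
  ring
end

section
/- For every v ∈ ℝ, ∂f̃_a/∂v (π/4, v) = (√2 · sin v / √(−2cos 4v + a⁴ + a⁻⁴))·(0, 1, −1); hence the curve v ↦ f̃_a(π/4, v) for 0 < v < π traces a line segment parallel to the line {x₀ = 0, x₁ + x₂ = 0}. -/
open Real

/-! Since `cos (4 (π/4 ± v)) = -cos (4v)`, the speed `ξ_a` takes the same value at `π/4 + v` and
`π/4 - v`. In `∂f̃/∂v (π/4, v) = (γ'(π/4 + v) - γ'(π/4 - v)) / 2` the first coordinates therefore
cancel, and the other two reduce to `cos (π/4 - v) - cos (π/4 + v) = sin (π/4 + v) - sin (π/4 - v)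
= √2 sin v`, up to sign. The derivative of the curve thus always points along `(0, 1, -1)`, so the
linear forms `x₀` and `x₁ + x₂` are constant along it. -/

theorem two_lt_add_inv_self {x : ℝ} (hx : 0 < x) (hx1 : x ≠ 1) : 2 < x + x⁻¹ := by
  have hsq : x + x⁻¹ - 2 = (x - 1) ^ 2 / x := by field_simp; ring
  have hpos : 0 < (x - 1) ^ 2 / x := div_pos (by positivity [sub_ne_zero.mpr hx1]) hx
  linarith

theorem hasDerivAt_half_smul_add_sub {E : Type*} [NormedAddCommGroup E] [NormedSpace ℝ E]
    {g g' : ℝ → E} (hg : ∀ s, HasDerivAt g (g' s) s) (u v : ℝ) :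
    HasDerivAt (fun v => (1 / 2 : ℝ) • (g (u + v) + g (u - v)))
      ((1 / 2 : ℝ) • (g' (u + v) - g' (u - v))) v := by
  have hadd : HasDerivAt (fun v => g (u + v)) (g' (u + v)) v :=
    (hg (u + v)).comp_const_add u v
  have hsub : HasDerivAt (fun v => g (u - v)) (-g' (u - v)) v :=
    (hg (u - v)).comp_const_sub u v
  exact ((hadd.add hsub).const_smul (1 / 2 : ℝ)).congr_deriv (by simp only [← sub_eq_add_neg])

theorem apply_eq_of_hasDerivAt_mem_ker {E F : Type*} [NormedAddCommGroup E] [NormedSpace ℝ E]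
    [NormedAddCommGroup F] [NormedSpace ℝ F] {f f' : ℝ → E} (hf : ∀ x, HasDerivAt f (f' x) x)
    (L : E →L[ℝ] F) (hL : ∀ x, L (f' x) = 0) (x y : ℝ) : L (f x) = L (f y) := by
  have hLf : ∀ x, HasDerivAt (L ∘ f) 0 x := fun x => by
    simpa only [hL x] using L.hasFDerivAt.comp_hasDerivAt x (hf x)
  exact is_const_of_deriv_eq_zero (fun x => (hLf x).differentiableAt) (fun x => (hLf x).deriv) x y

section

variable {a : ℝ}

theorem xi_pi_div_four_add (v : ℝ) :
    xi a (π / 4 + v) = 2 / √(-2 * cos (4 * v) + (a ^ 4 + (a ^ 4)⁻¹)) := by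
  rw [xi, show 4 * (π / 4 + v) = 4 * v + π by ring, cos_add_pi]
  ring_nf

theorem xi_pi_div_four_sub (v : ℝ) :
    xi a (π / 4 - v) = 2 / √(-2 * cos (4 * v) + (a ^ 4 + (a ^ 4)⁻¹)) := by
  rw [xi, show 4 * (π / 4 - v) = π - 4 * v by ring, cos_pi_sub]
  ring_nf

theorem continuous_xi_s8 (hA : 2 < a ^ 4 + (a ^ 4)⁻¹) : Continuous (xi a) := by
  have hpos : ∀ t, 0 < 2 * cos (4 * t) + (a ^ 4 + (a ^ 4)⁻¹) := fun t => by
    linarith [neg_one_le_cos (4 * t)]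
  exact continuous_const.div (by fun_prop) fun t => (sqrt_pos.mpr (hpos t)).ne'

theorem hasDerivAt_gam (hA : 2 < a ^ 4 + (a ^ 4)⁻¹) (s : ℝ) :
    HasDerivAt (gam a) (xi a s, -(xi a s * cos s), -(xi a s * sin s)) s := by
  have hxi := continuous_xi_s8 hA
  exact (hxi.integral_hasStrictDerivAt 0 s).hasDerivAt.prodMk
    (((hxi.mul continuous_cos).neg.integral_hasStrictDerivAt 0 s).hasDerivAt.prodMk
      ((hxi.mul continuous_sin).neg.integral_hasStrictDerivAt 0 s).hasDerivAt)

theorem hasDerivAt_ftilde_pi_div_four (hA : 2 < a ^ 4 + (a ^ 4)⁻¹) (v : ℝ) :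
    HasDerivAt (ftilde a (π / 4))
      ((√2 * sin v / √(-2 * cos (4 * v) + (a ^ 4 + (a ^ 4)⁻¹))) • ((0 : ℝ), (1 : ℝ), (-1 : ℝ)))
      v := by
  have hcos : cos (π / 4 - v) - cos (π / 4 + v) = √2 * sin v := by
    rw [cos_sub, cos_add, cos_pi_div_four, sin_pi_div_four]; ring
  have hsin : sin (π / 4 + v) - sin (π / 4 - v) = √2 * sin v := by
    rw [sin_sub, sin_add, cos_pi_div_four, sin_pi_div_four]; ring
  refine (hasDerivAt_half_smul_add_sub (hasDerivAt_gam hA) (π / 4) v).congr_deriv ?_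
  rw [xi_pi_div_four_add, xi_pi_div_four_sub]
  simp only [Prod.smul_mk, Prod.mk_sub_mk, smul_eq_mul, Prod.mk.injEq]
  refine ⟨by ring, ?_, ?_⟩
  · rw [← hcos]; ring
  · rw [← hsin]; ring

end

theorem statement8 (a : ℝ) (ha : a ∈ Set.Ioo (0:ℝ) 1) :
    (∀ v : ℝ, HasDerivAt (fun v' => ftilde a (π / 4) v')
      ((Real.sqrt 2 * Real.sin v /
          Real.sqrt (-2 * Real.cos (4 * v) + (a ^ 4 + (a ^ 4)⁻¹))) •
        ((0:ℝ), (1:ℝ), (-1:ℝ))) v) ∧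
    (∀ v ∈ Set.Ioo 0 π, (ftilde a (π / 4) v).1 = (ftilde a (π / 4) (π / 2)).1 ∧
      (ftilde a (π / 4) v).2.1 + (ftilde a (π / 4) v).2.2
        = (ftilde a (π / 4) (π / 2)).2.1 + (ftilde a (π / 4) (π / 2)).2.2) := by
  have hA : 2 < a ^ 4 + (a ^ 4)⁻¹ :=
    two_lt_add_inv_self (pow_pos ha.1 4) (pow_lt_one₀ ha.1.le ha.2 four_ne_zero).ne
  have hderiv := hasDerivAt_ftilde_pi_div_four hA
  refine ⟨hderiv, fun v _ => ⟨?_, ?_⟩⟩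
  · exact apply_eq_of_hasDerivAt_mem_ker hderiv (ContinuousLinearMap.fst ℝ ℝ (ℝ × ℝ)) (by simp) v (π / 2)
  · exact apply_eq_of_hasDerivAt_mem_ker hderiv
      ((ContinuousLinearMap.fst ℝ ℝ ℝ + ContinuousLinearMap.snd ℝ ℝ ℝ).comp (.snd ℝ ℝ (ℝ × ℝ))) (by simp) v (π / 2)
end
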